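/- Let G be a graph whose shortest odd cycle has length 5 (odd girth 5). If the edge set of G can be partitioned into the edge set of a bipartite subgraph and a matching, then G admits an orientation in which every cycle of length 5 is alternating. -/

import Mathlib

universe u

/-- An orientation of a simple graph: each edge receives exactly one of its two directions. -/
structure GraphOrientation {V : Type u} (G : SimpleGraph V) where
  dir : V → V → Prop
  adj_iff : ∀ u v, G.Adj u v ↔ (dir u v ∨ dir v u)
  asymm : ∀ u v, dir u v → ¬ dir v u

/-- The closed out-neighborhood of a vertex in an orientation. -/
def GraphOrientation.closedOutNbhd {V : Type u} {G : SimpleGraph V}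
    (D : GraphOrientation G) (v : V) : Set V :=
  insert v {u | D.dir v u}

/-- The directed local chromatic number of an oriented graph: the least `n` such that some
proper coloring of the underlying graph puts at most `n` colors on every closed
out-neighborhood. -/
noncomputable def psiD {V : Type u} {G : SimpleGraph V} (D : GraphOrientation G) : ℕ∞ :=
  sInf {n : ℕ∞ | ∃ c : V → ℕ, (∀ u w, G.Adj u w → c u ≠ c w) ∧
    ∀ v, (c '' D.closedOutNbhd v).encard ≤ n}

/-- `ψ_{d,min}`: the minimum of `ψ_d` over all orientations of `G`. -/
noncomputable def psiDMin {V : Type u} (G : SimpleGraph V) : ℕ∞ :=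
  ⨅ D : GraphOrientation G, psiD D

/-- `f : ZMod n → V` describes a cycle of length `n` in `G`. -/
def SimpleGraph.IsCycleMap {V : Type u} (G : SimpleGraph V) {n : ℕ} (f : ZMod n → V) : Prop :=
  Function.Injective f ∧ ∀ i, G.Adj (f i) (f (i + 1))

/-- The cycle described by `f` is alternating with respect to the direction relation `D`:
exactly one of its vertices is neither a source nor a sink of the cycle. -/
def IsAltCycle {V : Type u} (D : V → V → Prop) {n : ℕ} (f : ZMod n → V) : Prop :=
  ∃! i : ZMod n,
    ¬ ((D (f i) (f (i - 1)) ∧ D (f i) (f (i + 1))) ∨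
       (D (f (i - 1)) (f i) ∧ D (f (i + 1)) (f i)))

/-- The orientation `D` of `G` contains an alternating odd cycle. -/
def HasAltOddCycle {V : Type u} {G : SimpleGraph V} (D : GraphOrientation G) : Prop :=
  ∃ (n : ℕ) (f : ZMod n → V), Odd n ∧ G.IsCycleMap f ∧ IsAltCycle D.dir f

/-- The odd girth of `G`: the length of a shortest odd cycle. -/
noncomputable def oddGirth {V : Type u} (G : SimpleGraph V) : ℕ :=
  sInf {n | Odd n ∧ ∃ f : ZMod n → V, G.IsCycleMap f}

/-- The symmetric shift graph `S_m`. -/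
def shiftGraph (m : ℕ) : SimpleGraph {p : Fin m × Fin m // p.1 ≠ p.2} where
  Adj x y := x.1.2 = y.1.1 ∨ x.1.1 = y.1.2
  symm := ⟨fun _ _ h => h.elim (fun h => Or.inr h.symm) (fun h => Or.inl h.symm)⟩
  loopless := ⟨fun x h => h.elim (fun h => x.2 h.symm) (fun h => x.2 h)⟩

/-- The Kneser graph `KG(n,k)`. -/
def kneserGraph (n k : ℕ) : SimpleGraph {A : Finset (Fin n) // A.card = k} where
  Adj A B := Disjoint A.1 B.1 ∧ A ≠ B
  symm := ⟨fun _ _ h => ⟨h.1.symm, h.2.symm⟩⟩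
  loopless := ⟨fun _ h => h.2 rfl⟩

/-- A subset of `Fin n` (thought of as `[n]` arranged cyclically) is stable if it contains
no two cyclically consecutive elements. -/
def IsStableSet {n : ℕ} (A : Finset (Fin n)) : Prop :=
  ∀ i ∈ A, ∀ j ∈ A, (i.val + 1) % n ≠ j.val

/-- The Schrijver graph `SG(n,k)`. -/
def schrijverGraph (n k : ℕ) :
    SimpleGraph {A : Finset (Fin n) // A.card = k ∧ IsStableSet A} where
  Adj A B := Disjoint A.1 B.1 ∧ A ≠ B
  symm := ⟨fun _ _ h => ⟨h.1.symm, h.2.symm⟩⟩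
  loopless := ⟨fun _ h => h.2 rfl⟩

/-- The `r`-level generalized Mycielskian `M_r(G)`; `none` is the apex vertex `z`. -/
def genMycielskian {V : Type u} (G : SimpleGraph V) (r : ℕ) :
    SimpleGraph (Option (V × Fin r)) where
  Adj x y :=
    match x, y with
    | some (u, i), some (v, j) =>
        G.Adj u v ∧ (i.val + 1 = j.val ∨ j.val + 1 = i.val ∨ (i.val = 0 ∧ j.val = 0))
    | some (_, i), none => i.val = r - 1
    | none, some (_, j) => j.val = r - 1
    | none, none => False
  symm := by
    refine ⟨?_⟩
    rintro (_ | ⟨u, i⟩) (_ | ⟨v, j⟩) h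
    · exact h
    · exact h
    · exact h
    · exact ⟨h.1.symm, by tauto⟩
  loopless := by
    refine ⟨?_⟩
    rintro (_ | ⟨u, i⟩) h
    · exact h
    · exact G.irrefl h.1

/-!
Orient every edge of the bipartite part from colour class `0` to colour class `1`, and the
remaining (monochromatic, hence matching) edges arbitrarily. Along a `5`-cycle the colour changes
an even number of times, so the number of monochromatic edges is odd; since they form a matching,
no two of them are consecutive, so there is exactly one. Every vertex away from it sits between
two edges oriented from `0` to `1`, hence is a source or a sink, and of the two ends of the
monochromatic edge exactly one is.
-/

open Finset Function

theorem ZMod.even_card_filter_add_one_ne {n : ℕ} [NeZero n] (x : ZMod n → ZMod 2) :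
    Even #{i | x (i + 1) ≠ x i} := by
  have hstep : ∀ a b : ZMod 2, b - a = if b ≠ a then 1 else 0 := by decide
  rw [← ZMod.natCast_eq_zero_iff_even, ← sum_boole]
  simp_rw [← hstep]
  rw [sum_sub_distrib, sub_eq_zero]
  exact Equiv.sum_comp (Equiv.addRight 1) x

theorem ZMod.odd_card_filter_add_one_eq {n : ℕ} [NeZero n] (hn : Odd n) (x : ZMod n → ZMod 2) :
    Odd #{i | x (i + 1) = x i} := by
  have hsplit := card_filter_add_card_filter_not (s := univ) fun i => x (i + 1) = x i
  rw [card_univ, ZMod.card] at hsplit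
  rw [← hsplit] at hn
  exact (Nat.odd_add.mp hn).mpr (ZMod.even_card_filter_add_one_ne x)

theorem ZMod.card_eq_one_of_odd_of_add_one_notMem :
    ∀ S : Finset (ZMod 5), Odd #S → (∀ i ∈ S, i + 1 ∉ S) → #S = 1 := by
  decide

/-- Read `p j` as "the `j`-th edge of a cycle is traversed forwards"; then `p (i - 1) ↔ p i` says
that vertex `i` is neither a source nor a sink. -/
theorem ZMod.existsUnique_iff_sub_one {n : ℕ} (hn : 1 < n) {p : ZMod n → Prop}
    {x : ZMod n → ZMod 2} {i₀ : ZMod n} (hmono : ∀ j, x (j + 1) = x j ↔ j = i₀)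
    (hp : ∀ j ≠ i₀, (p j ↔ x j = 0)) :
    ∃! i, (p (i - 1) ↔ p i) := by
  have : Fact (1 < n) := ⟨hn⟩
  have hflip : ∀ a b : ZMod 2, a ≠ b → (a = 0 ↔ ¬b = 0) := by decide
  have hsucc : ∀ j ≠ i₀, (p j ↔ ¬x (j + 1) = 0) := fun j hj =>
    (hp j hj).trans (hflip _ _ fun h => hj ((hmono j).mp h.symm))
  have hpred : i₀ - 1 ≠ i₀ := by simp
  have hnext : i₀ + 1 ≠ i₀ := by simp
  have hbad : ∀ i, (p (i - 1) ↔ p i) → i = i₀ ∨ i = i₀ + 1 := by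
    intro i hi
    by_contra! h
    have hi₁ : i - 1 ≠ i₀ := fun e => h.2 (by rw [← e, sub_add_cancel])
    rw [hsucc _ hi₁, sub_add_cancel, hp i h.1] at hi
    tauto
  have hends : (p (i₀ - 1) ↔ p i₀) ↔ ¬(p (i₀ + 1 - 1) ↔ p (i₀ + 1)) := by
    rw [add_sub_cancel_right, hsucc _ hpred, sub_add_cancel, hp _ hnext, (hmono i₀).mpr rfl]
    tauto
  by_cases h : p (i₀ - 1) ↔ p i₀
  · refine ⟨i₀, h, fun i hi => (hbad i hi).resolve_right fun e => ?_⟩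
    subst e
    exact hends.mp h hi
  · refine ⟨i₀ + 1, not_not.mp (mt hends.mpr h), fun i hi => (hbad i hi).resolve_left ?_⟩
    rintro rfl
    exact h hi

namespace GraphOrientation

variable {V : Type u} {G : SimpleGraph V}

def ofInjective {α : Type*} [LinearOrder α] (G : SimpleGraph V) (k : V → α) (hk : Injective k) :
    GraphOrientation G where
  dir u v := G.Adj u v ∧ k u < k v
  adj_iff _ _ :=
    ⟨fun h => (hk.ne (G.ne_of_adj h)).lt_or_gt.imp (⟨h, ·⟩) (⟨h.symm, ·⟩),
      fun h => h.elim And.left fun h => h.1.symm⟩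
  asymm _ _ h h' := h.2.asymm h'.2

theorem dir_comm_iff (D : GraphOrientation G) {u v : V} (h : G.Adj u v) :
    D.dir v u ↔ ¬D.dir u v :=
  ⟨fun h' h'' => D.asymm _ _ h'' h', fun h' => ((D.adj_iff u v).mp h).resolve_left h'⟩

theorem exists_dir_of_lt {α : Type*} [LinearOrder α] (G : SimpleGraph V) (c : V → α) :
    ∃ D : GraphOrientation G, ∀ u v, G.Adj u v → c u < c v → D.dir u v := by
  let : LinearOrder V := IsWellOrder.linearOrder WellOrderingRel
  exact ⟨ofInjective G (fun v => toLex (c v, v)) fun u v h => congrArg Prod.snd (toLex.injective h),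
    fun u v huv hc => ⟨huv, Prod.Lex.toLex_lt_toLex.mpr (Or.inl hc)⟩⟩

theorem exists_dir_iff_eq_zero (G : SimpleGraph V) (c : V → ZMod 2) :
    ∃ D : GraphOrientation G, ∀ u v, G.Adj u v → c u ≠ c v → (D.dir u v ↔ c u = 0) := by
  obtain ⟨D, hD⟩ := exists_dir_of_lt G fun v => (c v).val
  have hval : ∀ a b : ZMod 2, a.val < b.val → a = 0 ∧ b ≠ 0 := by decide
  refine ⟨D, fun u v h hc => ?_⟩
  rcases ((ZMod.val_injective 2).ne hc).lt_or_gt with hlt | hlt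
  · exact iff_of_true (hD u v h hlt) (hval _ _ hlt).1
  · exact iff_of_false (D.asymm _ _ · (hD v u h.symm hlt)) (hval _ _ hlt).2

theorem isAltCycle_iff (D : GraphOrientation G) {n : ℕ} {f : ZMod n → V}
    (hf : ∀ i, G.Adj (f i) (f (i + 1))) :
    IsAltCycle D.dir f ↔ ∃! i, (D.dir (f (i - 1)) (f i) ↔ D.dir (f i) (f (i + 1))) := by
  have hback : ∀ i, D.dir (f i) (f (i - 1)) ↔ ¬D.dir (f (i - 1)) (f i) := fun i =>
    D.dir_comm_iff (by simpa using hf (i - 1))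
  simp only [IsAltCycle, hback, D.dir_comm_iff (hf _)]
  exact existsUnique_congr fun i => by tauto

end GraphOrientation

namespace SimpleGraph

variable {V : Type u} {G B M : SimpleGraph V}

theorem not_adj_and_adj_of_matching (hM : ∀ u v w, M.Adj u v → M.Adj u w → v = w) {n : ℕ}
    (hn : 2 < n) {f : ZMod n → V} (hf : Injective f) (i : ZMod n) :
    ¬(M.Adj (f i) (f (i + 1)) ∧ M.Adj (f (i + 1)) (f (i + 1 + 1))) := by
  rintro ⟨h₁, h₂⟩
  have hi : i = i + 1 + 1 := hf (hM _ _ _ h₁.symm h₂)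
  have h2 : ((2 : ℕ) : ZMod n) ≠ 0 := by
    rw [Ne, ZMod.natCast_eq_zero_iff]
    exact Nat.not_dvd_of_pos_of_lt two_pos hn
  apply h2
  push_cast
  linear_combination -hi

theorem IsCycleMap.existsUnique_monochromatic (hGBM : ∀ u v, G.Adj u v → B.Adj u v ∨ M.Adj u v)
    (hM : ∀ u v w, M.Adj u v → M.Adj u w → v = w) (c : B.Coloring (ZMod 2)) {f : ZMod 5 → V}
    (hf : G.IsCycleMap f) :
    ∃ i₀, ∀ j, c (f (j + 1)) = c (f j) ↔ j = i₀ := by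
  set S : Finset (ZMod 5) := {i | c (f (i + 1)) = c (f i)}
  have hSM : ∀ i ∈ S, M.Adj (f i) (f (i + 1)) := fun i hi =>
    (hGBM _ _ (hf.2 i)).resolve_left fun hB => c.valid hB (mem_filter.mp hi).2.symm
  have hS : #S = 1 :=
    ZMod.card_eq_one_of_odd_of_add_one_notMem S
      (ZMod.odd_card_filter_add_one_eq (by decide) fun i => c (f i))
      fun i hi hi' => not_adj_and_adj_of_matching hM (by norm_num) hf.1 i ⟨hSM i hi, hSM _ hi'⟩
  obtain ⟨i₀, hi₀⟩ := card_eq_one.mp hS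
  exact ⟨i₀, fun j => by simpa [S] using Finset.ext_iff.mp hi₀ j⟩

end SimpleGraph

theorem statement15_general {V : Type u} (G : SimpleGraph V)
    (B M : SimpleGraph V)
    (hpart : ∀ u v, G.Adj u v ↔ (B.Adj u v ∨ M.Adj u v))
    (hB : B.Colorable 2)
    (hM : ∀ u v w, M.Adj u v → M.Adj u w → v = w) :
    ∃ D : GraphOrientation G,
      ∀ f : ZMod 5 → V, G.IsCycleMap f → IsAltCycle D.dir f := by
  -- `ZMod 2` is `Fin 2` by definition
  obtain ⟨c⟩ : Nonempty (B.Coloring (ZMod 2)) := hB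
  obtain ⟨D, hD⟩ := GraphOrientation.exists_dir_iff_eq_zero G c
  refine ⟨D, fun f hf => ?_⟩
  obtain ⟨i₀, hi₀⟩ := hf.existsUnique_monochromatic (fun u v => (hpart u v).mp) hM c
  rw [D.isAltCycle_iff hf.2]
  simpa only [sub_add_cancel] using
    ZMod.existsUnique_iff_sub_one (p := fun j => D.dir (f j) (f (j + 1))) (by norm_num) hi₀
      fun j hj => hD _ _ (hf.2 j) fun h => hj ((hi₀ j).mp h.symm)

theorem statement15 {V : Type u} (G : SimpleGraph V) (hog : oddGirth G = 5)
    (B M : SimpleGraph V)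
    (hpart : ∀ u v, G.Adj u v ↔ (B.Adj u v ∨ M.Adj u v))
    (hdisj : ∀ u v, ¬ (B.Adj u v ∧ M.Adj u v))
    (hB : B.Colorable 2)
    (hM : ∀ u v w, M.Adj u v → M.Adj u w → v = w) :
    ∃ D : GraphOrientation G,
      ∀ f : ZMod 5 → V, G.IsCycleMap f → IsAltCycle D.dir f :=
  statement15_general G B M hpart hB hM
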